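/- Let k ≥ 2 be an integer. The polynomials P^k_n form a divisibility sequence: for all integers m, n ≥ 1 with m | n, the polynomial P^k_m divides P^k_n in ℝ[x]. -/
import Mathlib


open Polynomial

/-- The generalized Fibonacci polynomials `P^k_n ∈ ℝ[x]`:
`P^k_0 = 0`, `P^k_1 = 1`, `P^k_n = x·P^k_{n-1} − k·P^k_{n-2}`. -/
noncomputable def Ppoly (k : ℕ) : ℕ → Polynomial ℝ
  | 0 => 0
  | 1 => 1
  | n + 2 => X * Ppoly k (n + 1) - C (k : ℝ) * Ppoly k n

lemma Ppoly_add (k : ℕ) : ∀ m n, Ppoly k (m + n + 1) =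
    Ppoly k (m + 1) * Ppoly k (n + 1) - C (k : ℝ) * Ppoly k m * Ppoly k n := by
  intro m
  induction m using Nat.strong_induction_on with
  | _ m ih =>
    match m with
    | 0 => intro n; simp [Ppoly]
    | 1 => intro n; rw [show 1 + n + 1 = n + 2 by omega]; simp [Ppoly]
    | m + 2 =>
      intro n
      have h1 := ih (m + 1) (by omega) n
      have h0 := ih m (by omega) n
      have e1 : m + 2 + n + 1 = (m + n + 1) + 2 := by ring
      have e2 : m + 1 + n + 1 = m + n + 2 := by ring
      rw [e1, show m + 2 + 1 = m + 3 from rfl]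
      rw [e2] at h1
      simp only [Ppoly] at *
      rw [h1, h0]
      ring

theorem Ppoly_divisibility_sequence (k m n : ℕ) (hk : 2 ≤ k) (hm : 1 ≤ m) (hn : 1 ≤ n)
    (hdvd : m ∣ n) : Ppoly k m ∣ Ppoly k n := by
  obtain ⟨t, rfl⟩ := hdvd
  have ht : 1 ≤ t := by
    rcases Nat.eq_zero_or_pos t with h | h
    · subst h; simp at hn
    · exact h
  clear hn
  induction t with
  | zero => omega
  | succ t iht =>
    rcases Nat.eq_zero_or_pos t with h | h
    · subst h; simpa using dvd_refl _
    · have key := Ppoly_add k (m * t) (m - 1)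
      have e : m * t + (m - 1) + 1 = m * (t + 1) := by
        cases m with
        | zero => omega
        | succ m' => ring_nf; omega
      rw [e] at key
      rw [key]
      have hm1 : m - 1 + 1 = m := by omega
      rw [hm1]
      exact dvd_sub (Dvd.dvd.mul_left (dvd_refl _) _)
        (by
          have := iht h
          exact Dvd.dvd.mul_right (Dvd.dvd.mul_left this _) _)
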